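/- arXiv:1910.12594 — 4 statements merged into one kernel-verified Lean document; each statement's English description precedes it below -/
import Mathlib

section
/- If a graph G is connected and the number of vertices in a longest path of G equals the number of vertices in a longest cycle of G, then G is Hamiltonian. -/
/-!
If some vertex lies off the cycle `c`, connectivity gives an edge `xy` with `x` on `c` and `y`
off it. Opening `c` at `x` into a path ending at `x` and appending `xy` yields a path with
`c.length + 1` vertices, more than a longest path has. Hence `c` passes through every vertex.
-/

namespace SimpleGraph.Walk

variable {V : Type*} [DecidableEq V] {G : SimpleGraph V}

lemma IsCycle.exists_isPath_length_eq_of_adj {w x y : V} {c : G.Walk w w} (hc : c.IsCycle)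
    (hx : x ∈ c.support) (hy : y ∉ c.support) (hxy : G.Adj x y) :
    ∃ (a : V) (q : G.Walk a y), q.IsPath ∧ q.length = c.length := by
  set c' := c.rotate x hx
  have hc' : c'.IsCycle := hc.rotate hx
  have hy' : y ∉ c'.tail.support := fun h ↦ hy <| (mem_support_rotate_iff c x hx).mp <|
    List.mem_of_mem_tail (support_tail_of_not_nil c' hc'.not_nil ▸ h)
  refine ⟨_, c'.tail.concat hxy, hc'.isPath_tail.concat hy' hxy, ?_⟩
  rw [length_concat, length_tail_add_one hc'.not_nil, length_rotate]

lemma IsCycle.mem_support_of_forall_isPath_length_lt {w : V} {c : G.Walk w w} (hc : c.IsCycle)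
    (hconn : G.Connected)
    (hlong : ∀ (x y : V) (q : G.Walk x y), q.IsPath → q.length < c.length) (a : V) :
    a ∈ c.support := by
  by_contra ha
  obtain ⟨d, -, hd, hd'⟩ :=
    (hconn w a).some.exists_boundary_dart {x | x ∈ c.support} c.start_mem_support ha
  obtain ⟨b, q, hq, hlen⟩ := hc.exists_isPath_length_eq_of_adj hd hd' d.adj
  exact (hlong b _ q hq).ne hlen

lemma IsCycle.isHamiltonianCycle_of_forall_mem_support {w : V} {c : G.Walk w w}
    (hc : c.IsCycle) (h : ∀ a, a ∈ c.support) : c.IsHamiltonianCycle := by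
  refine ⟨hc, hc.isPath_tail.isHamiltonian_of_mem fun a ↦ ?_⟩
  rw [support_tail_of_not_nil c hc.not_nil]
  obtain rfl | ha := c.mem_support_iff.mp (h a)
  · exact end_mem_tail_support hc.not_nil
  · exact ha

end SimpleGraph.Walk

theorem stmt_0_general {V : Type*} [Fintype V] [DecidableEq V] (G : SimpleGraph V)
    (hconn : G.Connected)
    (u v : V) (p : G.Walk u v)
    (hpmax : ∀ (x y : V) (q : G.Walk x y), q.IsPath → q.length ≤ p.length)
    (w : V) (c : G.Walk w w) (hc : c.IsCycle)
    (heq : p.length + 1 = c.length) :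
    G.IsHamiltonian := by
  have hlong (x y : V) (q : G.Walk x y) (hq : q.IsPath) : q.length < c.length :=
    (hpmax x y q hq).trans_lt (by omega)
  exact fun _ ↦ ⟨w, c, hc.isHamiltonianCycle_of_forall_mem_support
    (hc.mem_support_of_forall_isPath_length_lt hconn hlong)⟩

/-- If a graph `G` on at least 3 vertices is connected and the number of vertices in a longest
path of `G` equals the number of vertices in a longest cycle of `G`, then `G` is Hamiltonian.
A path of length `ℓ` has `ℓ + 1` vertices; a cycle of length `ℓ` has `ℓ` vertices. -/
theorem stmt_0 {V : Type*} [Fintype V] [DecidableEq V] (G : SimpleGraph V)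
    (hcard : 3 ≤ Fintype.card V) (hconn : G.Connected)
    (u v : V) (p : G.Walk u v) (hp : p.IsPath)
    (hpmax : ∀ (x y : V) (q : G.Walk x y), q.IsPath → q.length ≤ p.length)
    (w : V) (c : G.Walk w w) (hc : c.IsCycle)
    (hcmax : ∀ (x : V) (d : G.Walk x x), d.IsCycle → d.length ≤ c.length)
    (heq : p.length + 1 = c.length) :
    G.IsHamiltonian :=
  stmt_0_general G hconn u v p hpmax w c hc heq
end

section
/- Let G be a graph, let P be a longest path in G with fixed endpoint v_0, and let End(v_0) be the set of endpoints (other than v_0) of all paths obtainable from P by sequences of Pósa rotations fixing v_0. Then |N_G(End(v_0))| < 2|End(v_0)|, where N_G(S) denotes the external neighbourhood of S. -/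
/-- `q` is obtained from the path `p` (from `v₀` to `w`) by a single Pósa rotation:
for some `i < length p - 1` with `v_i` adjacent to `w`, `q` is the path
`v₀,…,v_i,w,…,v_{i+1}` ending at `v_{i+1}`. -/
def IsPosaRotation {V : Type*} (G : SimpleGraph V) {v0 w y : V}
    (p : G.Walk v0 w) (q : G.Walk v0 y) : Prop :=
  ∃ i : ℕ, i + 1 < p.length ∧ G.Adj (p.getVert i) w ∧ y = p.getVert (i + 1) ∧
    q.support = p.support.take (i + 1) ++ (p.support.drop (i + 1)).reverse

/-- The paths obtainable from `p0` by a sequence of Pósa rotations fixing `v₀`. -/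
inductive PosaReachable {V : Type*} (G : SimpleGraph V) {v0 w0 : V} (p0 : G.Walk v0 w0) :
    ∀ {w : V}, G.Walk v0 w → Prop
  | base : PosaReachable G p0 p0
  | rot {w y : V} (p : G.Walk v0 w) (q : G.Walk v0 y) :
      PosaReachable G p0 p → IsPosaRotation G p q → PosaReachable G p0 q

/-- `End(v₀)`: the set of endpoints other than `v₀` of paths obtainable from `p0` by
sequences of Pósa rotations with fixed endpoint `v₀`. -/
def posaEnd {V : Type*} (G : SimpleGraph V) {v0 w0 : V} (p0 : G.Walk v0 w0) : Set V :=
  {y | y ≠ v0 ∧ ∃ q : G.Walk v0 y, PosaReachable G p0 q}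

/-- The external neighbourhood `N_G(S) = {u ∉ S : u has a neighbour in S}`. -/
def extNbhd {V : Type*} (G : SimpleGraph V) (S : Set V) : Set V :=
  {u | u ∉ S ∧ ∃ s ∈ S, G.Adj s u}

/-! Rotations only destroy edges of `p0` at the current endpoint, so every edge of `p0` missing
from a rotated path `Q` meets `End(v₀)`. Let `v ∈ N(End(v₀))` be adjacent to the endpoint `u`
of such a `Q`. By maximality `v` lies on `Q`, and its successor on `Q` is in `End(v₀)`: rotate
at `v`, or it is `u` itself. If no `p0`-neighbour of `v` were in `End(v₀)`, every `p0`-edge at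
`v` would survive in `Q`; since `v` is an endpoint of neither path, it has as many neighbours on
`Q` as on `p0`, so its successor on `Q` would be such a `p0`-neighbour. Hence `N(End(v₀))` is
covered by the `p0`-neighbourhoods of the vertices of `End(v₀)`, which have at most two elements
each, and only one for `w₀ ∈ End(v₀)`. -/

namespace SimpleGraph.Walk

variable {V : Type*} {G : SimpleGraph V} {u v x : V}

def posaRotate (p : G.Walk u v) (i : ℕ) (h : G.Adj (p.getVert i) v) :
    G.Walk u (p.getVert (i + 1)) :=
  ((p.take i).concat h).append (p.drop (i + 1)).reverse

lemma support_posaRotate (p : G.Walk u v) {i : ℕ} (h : G.Adj (p.getVert i) v)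
    (hi : i < p.length) :
    (p.posaRotate i h).support = p.support.take (i + 1) ++ (p.support.drop (i + 1)).reverse := by
  have hrev := (p.drop (i + 1)).reverse.cons_tail_support.symm
  rw [support_reverse, drop_support_eq_support_drop_min, min_eq_left hi] at hrev
  rw [posaRotate, support_append, support_concat, support_take, support_reverse,
    drop_support_eq_support_drop_min, min_eq_left hi, hrev]
  simp

lemma mem_edges_posaRotate {p : G.Walk u v} {i : ℕ} (h : G.Adj (p.getVert i) v)
    (hi : i < p.length) {e : Sym2 V} (he : e ∈ p.edges)
    (hne : e ≠ s(p.getVert i, p.getVert (i + 1))) : e ∈ (p.posaRotate i h).edges := by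
  have hsplit : p.edges = (p.take i).edges ++ s(p.getVert i, p.getVert (i + 1)) ::
      (p.drop (i + 1)).edges := by
    rw [edges_take, edges_drop, ← getElem_edges (by simpa using hi),
      ← List.drop_eq_getElem_cons, List.take_append_drop]
  rw [hsplit] at he
  simp only [posaRotate, edges_append, edges_concat, edges_reverse, List.concat_eq_append,
    List.mem_append, List.mem_cons, List.mem_reverse] at he ⊢
  tauto

lemma IsPath.ncard_neighborSet_toSubgraph [DecidableEq V] {p : G.Walk u v} (hp : p.IsPath)
    (hx : x ∈ p.support) (hxv : x ≠ v) :
    (p.toSubgraph.neighborSet x).ncard = if x = u then 1 else 2 := by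
  obtain ⟨n, rfl, hn⟩ := mem_support_iff_exists_getVert.1 hx
  have hnl : n < p.length := lt_of_le_of_ne hn (by rintro rfl; simp at hxv)
  split_ifs with hxu
  · rw [hxu, hp.neighborSet_toSubgraph_startpoint (not_nil_iff_lt_length.2 (by omega)),
      Set.ncard_singleton]
  · exact hp.ncard_neighborSet_toSubgraph_internal_eq_two (by rintro rfl; simp at hxu) hnl

end SimpleGraph.Walk

section Posa

open SimpleGraph Walk

variable {V : Type*} {G : SimpleGraph V} {v0 w0 w y : V} {p0 : G.Walk v0 w0}

lemma isPosaRotation_posaRotate (p : G.Walk v0 w) {i : ℕ} (hi : i + 1 < p.length)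
    (h : G.Adj (p.getVert i) w) : IsPosaRotation G p (p.posaRotate i h) :=
  ⟨i, hi, h, rfl, p.support_posaRotate h (by omega)⟩

lemma IsPosaRotation.mem_of_mem_edges_of_notMem_edges {p : G.Walk v0 w} {q : G.Walk v0 y}
    (hpq : IsPosaRotation G p q) {e : Sym2 V} (hp : e ∈ p.edges) (hq : e ∉ q.edges) :
    y ∈ e := by
  obtain ⟨i, hi, h, rfl, hsupp⟩ := hpq
  obtain rfl : q = p.posaRotate i h :=
    ext_support (by rw [hsupp, p.support_posaRotate h (by omega)])
  by_contra hy
  refine hq (mem_edges_posaRotate h (by omega) hp ?_)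
  rintro rfl
  exact hy (Sym2.mem_mk_right _ _)

namespace PosaReachable

lemma support_perm {q : G.Walk v0 y} (h : PosaReachable G p0 q) :
    q.support.Perm p0.support := by
  induction h with
  | base => rfl
  | rot p q _ hpq ih =>
    obtain ⟨i, -, -, -, hsupp⟩ := hpq
    refine .trans ?_ ih
    rw [hsupp]
    simpa using (List.reverse_perm (p.support.drop (i + 1))).append_left (p.support.take (i + 1))

lemma isPath (hp0 : p0.IsPath) {q : G.Walk v0 y} (h : PosaReachable G p0 q) : q.IsPath :=
  isPath_def _ |>.2 <| h.support_perm.nodup_iff.2 hp0.support_nodup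

lemma length_eq {q : G.Walk v0 y} (h : PosaReachable G p0 q) : q.length = p0.length := by
  simpa using h.support_perm.length_eq

lemma mem_posaEnd (hp0 : p0.IsPath) (hlen : 0 < p0.length) {q : G.Walk v0 y}
    (h : PosaReachable G p0 q) : y ∈ posaEnd G p0 := by
  refine ⟨?_, q, h⟩
  rintro rfl
  rw [← h.length_eq, ← not_nil_iff_lt_length] at hlen
  exact hlen (isPath_iff_nil.1 (h.isPath hp0))

lemma exists_mem_posaEnd_of_notMem_edges (hp0 : p0.IsPath) (hlen : 0 < p0.length)
    {q : G.Walk v0 y} (h : PosaReachable G p0 q) {e : Sym2 V} (he : e ∈ p0.edges)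
    (hq : e ∉ q.edges) : ∃ x ∈ posaEnd G p0, x ∈ e := by
  induction h with
  | base => exact absurd he hq
  | rot p q hp hpq ih =>
    by_cases hep : e ∈ p.edges
    · exact ⟨_, (hp.rot p q hpq).mem_posaEnd hp0 hlen,
        hpq.mem_of_mem_edges_of_notMem_edges hep hq⟩
    · exact ih hep

lemma neighborSet_toSubgraph_subset (hp0 : p0.IsPath) (hlen : 0 < p0.length)
    {q : G.Walk v0 y} (h : PosaReachable G p0 q) {v : V} (hv : v ∉ posaEnd G p0)
    (hnone : ∀ x ∈ posaEnd G p0, ¬p0.toSubgraph.Adj x v) :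
    p0.toSubgraph.neighborSet v ⊆ q.toSubgraph.neighborSet v := by
  intro x hx
  rw [Subgraph.mem_neighborSet, adj_toSubgraph_iff_mem_edges] at hx ⊢
  by_contra hxq
  obtain ⟨z, hzE, hz⟩ := h.exists_mem_posaEnd_of_notMem_edges hp0 hlen hx hxq
  rcases Sym2.mem_iff.1 hz with rfl | rfl
  · exact hv hzE
  · exact hnone z hzE (adj_toSubgraph_iff_mem_edges.2 (Sym2.eq_swap ▸ hx))

end PosaReachable

lemma posaEnd_subset_support : posaEnd G p0 ⊆ {x | x ∈ p0.support} := by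
  rintro x ⟨-, q, hq⟩
  exact hq.support_perm.subset q.end_mem_support

lemma ncard_neighborSet_toSubgraph_of_mem_posaEnd [DecidableEq V] (hp0 : p0.IsPath) {x : V}
    (hx : x ∈ posaEnd G p0) :
    (p0.toSubgraph.neighborSet x).ncard = if x = w0 then 1 else 2 := by
  rw [← toSubgraph_reverse]
  exact hp0.reverse.ncard_neighborSet_toSubgraph (by simpa using posaEnd_subset_support hx) hx.1

lemma exists_mem_posaEnd_adj_toSubgraph (hp0 : p0.IsPath) (hlen : 0 < p0.length)
    (hmax : ∀ (x y : V) (q : G.Walk x y), q.IsPath → q.length ≤ p0.length) {v : V}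
    (hv : v ∈ extNbhd G (posaEnd G p0)) : ∃ x ∈ posaEnd G p0, p0.toSubgraph.Adj x v := by
  classical
  obtain ⟨hvE, u, ⟨-, Q, hQ⟩, hadj⟩ := hv
  have huE : u ∈ posaEnd G p0 := hQ.mem_posaEnd hp0 hlen
  have hw0E : w0 ∈ posaEnd G p0 := PosaReachable.base.mem_posaEnd hp0 hlen
  have hQp : Q.IsPath := hQ.isPath hp0
  have hvQ : v ∈ Q.support := by
    by_contra hvQ
    have := hmax _ _ _ (hQp.concat hvQ hadj)
    rw [length_concat, hQ.length_eq] at this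
    omega
  obtain ⟨i, rfl, hi⟩ := mem_support_iff_exists_getVert.1 hvQ
  have hiQ : i < Q.length := lt_of_le_of_ne hi (by rintro rfl; exact hvE (by simpa using huE))
  have hsuccE : Q.getVert (i + 1) ∈ posaEnd G p0 := by
    rcases (show i + 1 < Q.length ∨ i + 1 = Q.length by omega) with h | h
    · exact (hQ.rot _ _ (isPosaRotation_posaRotate Q h hadj.symm)).mem_posaEnd hp0 hlen
    · rwa [h, getVert_length]
  by_contra! hnone
  have heq : p0.toSubgraph.neighborSet (Q.getVert i) = Q.toSubgraph.neighborSet (Q.getVert i) := by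
    refine Set.eq_of_subset_of_ncard_le (hQ.neighborSet_toSubgraph_subset hp0 hlen hvE hnone) ?_
      (finite_neighborSet_toSubgraph Q)
    rw [hQp.ncard_neighborSet_toSubgraph hvQ (ne_of_mem_of_not_mem huE hvE).symm,
      hp0.ncard_neighborSet_toSubgraph (hQ.support_perm.subset hvQ)
        (ne_of_mem_of_not_mem hw0E hvE).symm]
  have hadjQ : Q.toSubgraph.Adj (Q.getVert i) (Q.getVert (i + 1)) := Q.toSubgraph_adj_getVert hiQ
  rw [← Subgraph.mem_neighborSet, ← heq, Subgraph.mem_neighborSet] at hadjQ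
  exact hnone _ hsuccE hadjQ.symm

end Posa

theorem stmt_3_general {V : Type*} [DecidableEq V] (G : SimpleGraph V)
    (v0 w0 : V) (p0 : G.Walk v0 w0) (hp0 : p0.IsPath) (hlen : 0 < p0.length)
    (hmax : ∀ (x y : V) (q : G.Walk x y), q.IsPath → q.length ≤ p0.length) :
    (extNbhd G (posaEnd G p0)).ncard < 2 * (posaEnd G p0).ncard := by
  set E := posaEnd G p0
  have hE : E.Finite := p0.support.finite_toSet.subset posaEnd_subset_support
  have hsub : extNbhd G E ⊆ ⋃ x ∈ hE.toFinset, p0.toSubgraph.neighborSet x := fun v hv => by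
    obtain ⟨x, hx, hadj⟩ := exists_mem_posaEnd_adj_toSubgraph hp0 hlen hmax hv
    exact Set.mem_biUnion (hE.mem_toFinset.2 hx) hadj
  have hdeg : ∀ x ∈ hE.toFinset,
      (p0.toSubgraph.neighborSet x).ncard = if x = w0 then 1 else 2 := fun x hx =>
    ncard_neighborSet_toSubgraph_of_mem_posaEnd hp0 (hE.mem_toFinset.1 hx)
  have hw0 : w0 ∈ hE.toFinset := hE.mem_toFinset.2 (PosaReachable.base.mem_posaEnd hp0 hlen)
  calc (extNbhd G E).ncard
      ≤ (⋃ x ∈ hE.toFinset, p0.toSubgraph.neighborSet x).ncard :=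
        Set.ncard_le_ncard hsub <|
          hE.toFinset.finite_toSet.biUnion fun _ _ => p0.finite_neighborSet_toSubgraph
    _ ≤ ∑ x ∈ hE.toFinset, (p0.toSubgraph.neighborSet x).ncard :=
        hE.toFinset.set_ncard_biUnion_le _
    _ < ∑ x ∈ hE.toFinset, 2 :=
        Finset.sum_lt_sum (fun x hx => by rw [hdeg x hx]; split_ifs <;> omega)
          ⟨w0, hw0, by simp [hdeg w0 hw0]⟩
    _ = 2 * E.ncard := by
        rw [Finset.sum_const, smul_eq_mul, mul_comm, Set.ncard_eq_toFinset_card E hE]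

/-- If `P` is a longest path in `G` with endpoint `v₀`, then the external neighbourhood of the
Pósa end-set `End(v₀)` has fewer than `2 |End(v₀)|` vertices. -/
theorem stmt_3 {V : Type*} [Fintype V] [DecidableEq V] (G : SimpleGraph V)
    (v0 w0 : V) (p0 : G.Walk v0 w0) (hp0 : p0.IsPath) (hlen : 0 < p0.length)
    (hmax : ∀ (x y : V) (q : G.Walk x y), q.IsPath → q.length ≤ p0.length) :
    (extNbhd G (posaEnd G p0)).ncard < 2 * (posaEnd G p0).ncard :=
  stmt_3_general G v0 w0 p0 hp0 hlen hmax
end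

section
/- Let G be a graph on n vertices in which every set S of vertices with |S| ≤ δn induces at most ε|S| log n edges, and at most n^{0.9} vertices have degree below (1/2) log n. If S is a set of vertices with n/(log n)² ≤ |S| ≤ (δ/3)n (with n large so n^{0.9} ≤ |S|/10), then the number of edges of G from S to its complement is at least |S| log n / 4. -/
/-- Let `G` be a graph on `n` vertices in which every set `T` with `|T| ≤ δn` induces at most
`(1/24)|T| log n` edges, and at most `n^{0.9}` vertices have degree below `(1/2) log n`.  If
`n/(log n)² ≤ |S| ≤ (δ/3)n` and `n^{0.9} ≤ |S|/10`, then the number of edges from `S` to its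
complement is at least `|S| log n / 4`.  (Induced edges are counted via ordered pairs:
`|(T ×ˢ T).filter Adj| = 2 e(T)`; crossing edges via `(S ×ˢ Sᶜ).filter Adj`.) -/
theorem stmt_17 {V : Type*} [Fintype V] [DecidableEq V] (G : SimpleGraph V)
    [DecidableRel G.Adj] (n : ℕ) (hn : n = Fintype.card V) (δ : ℝ) (hδ : 0 < δ)
    (hind : ∀ T : Finset V, (T.card : ℝ) ≤ δ * n →
      ((((T ×ˢ T).filter fun p => G.Adj p.1 p.2).card : ℝ)) ≤
        2 * ((1 / 24) * T.card * Real.log n))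
    (hdeg : ((Finset.univ.filter fun v : V => (G.degree v : ℝ) < Real.log n / 2).card : ℝ) ≤
      (n : ℝ) ^ (0.9 : ℝ))
    (S : Finset V)
    (hlo : (n : ℝ) / (Real.log n) ^ 2 ≤ S.card) (hhi : (S.card : ℝ) ≤ δ * n / 3)
    (hsmall : (n : ℝ) ^ (0.9 : ℝ) ≤ (S.card : ℝ) / 10) :
    (S.card : ℝ) * Real.log n / 4 ≤
      (((S ×ˢ Sᶜ).filter fun p => G.Adj p.1 p.2).card : ℝ) := by
  classical
  set L := Real.log n with hLdef
  by_cases hL : L ≤ 0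
  · have h1 : (S.card : ℝ) * L / 4 ≤ 0 := by
      have := mul_nonpos_of_nonneg_of_nonpos (by positivity : (0:ℝ) ≤ (S.card:ℝ)) hL
      linarith
    have h2 : (0:ℝ) ≤ (((S ×ˢ Sᶜ).filter fun p => G.Adj p.1 p.2).card : ℝ) := by positivity
    linarith
  push_neg at hL
  -- fiber counting
  have h1 : ∀ T : Finset V, ((S ×ˢ T).filter fun p => G.Adj p.1 p.2).card
      = ∑ v ∈ S, (T.filter (G.Adj v)).card := by
    intro T
    rw [Finset.card_filter, Finset.sum_product]
    exact Finset.sum_congr rfl fun v _ => (Finset.card_filter _ _).symm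
  have hsplit : ∀ v : V, (Finset.univ.filter (G.Adj v)).card
      = (S.filter (G.Adj v)).card + (Sᶜ.filter (G.Adj v)).card := by
    intro v
    rw [← Finset.union_compl S, Finset.filter_union, Finset.card_union_of_disjoint]
    exact Finset.disjoint_filter_filter disjoint_compl_right
  have hdegsum : ∑ v ∈ S, G.degree v
      = ((S ×ˢ S).filter fun p => G.Adj p.1 p.2).card
        + ((S ×ˢ Sᶜ).filter fun p => G.Adj p.1 p.2).card := by
    rw [h1 S, h1 Sᶜ, ← Finset.sum_add_distrib]
    refine Finset.sum_congr rfl fun v _ => ?_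
    rw [← hsplit v, SimpleGraph.degree, SimpleGraph.neighborFinset_eq_filter]
  -- bad vertices
  set B := S.filter (fun v => (G.degree v : ℝ) < L / 2) with hBdef
  have hBsub : B ⊆ S := Finset.filter_subset _ _
  have hBcard : (B.card : ℝ) ≤ (S.card : ℝ) / 10 := by
    refine le_trans ?_ (le_trans hdeg hsmall)
    exact_mod_cast Nat.cast_le.mpr (Finset.card_le_card
      (Finset.filter_subset_filter _ (Finset.subset_univ S)))
  -- lower bound on degree sum
  have hgood : ((S \ B).card : ℝ) * (L / 2) ≤ ∑ v ∈ S, (G.degree v : ℝ) := by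
    have hstep : ((S \ B).card : ℝ) * (L / 2) ≤ ∑ v ∈ S \ B, (G.degree v : ℝ) := by
      rw [Finset.card_eq_sum_ones (S \ B)]
      push_cast
      rw [Finset.sum_mul]
      refine Finset.sum_le_sum fun v hv => ?_
      rw [one_mul]
      rcases Finset.mem_sdiff.mp hv with ⟨hvS, hvB⟩
      by_contra hlt
      exact hvB (Finset.mem_filter.mpr ⟨hvS, by linarith⟩)
    refine hstep.trans (Finset.sum_le_sum_of_subset_of_nonneg (Finset.sdiff_subset)
      fun v _ _ => by positivity)
  have hcardSB : ((S \ B).card : ℝ) = (S.card : ℝ) - (B.card : ℝ) := by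
    rw [Finset.card_sdiff_of_subset hBsub]
    have := Finset.card_le_card hBsub
    push_cast [Nat.cast_sub this]
    ring
  -- induced edges bound
  have hS_le : (S.card : ℝ) ≤ δ * n := by
    have hδn : (0:ℝ) ≤ δ * n := by positivity
    linarith
  have hindS := hind S hS_le
  -- combine
  have hdegsumR : ∑ v ∈ S, (G.degree v : ℝ)
      = (((S ×ˢ S).filter fun p => G.Adj p.1 p.2).card : ℝ)
        + (((S ×ˢ Sᶜ).filter fun p => G.Adj p.1 p.2).card : ℝ) := by
    exact_mod_cast congrArg (Nat.cast : ℕ → ℝ) hdegsum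
  have hs0 : (0:ℝ) ≤ (S.card : ℝ) := by positivity
  nlinarith [mul_nonneg hs0 hL.le, mul_pos hL (show (0:ℝ) < 1 by norm_num),
    mul_le_mul_of_nonneg_right hBcard (by linarith : (0:ℝ) ≤ L / 2)]
end

section
/- In the stochastic block model G(𝐧, p, q) with p, q ≤ C log n / n, the expected number of vertex sets S of size s ≤ n/log² n inducing more than 3s edges, summed over all such s, is o(1); hence a.a.s. every set S with |S| ≤ n/log² n induces at most 3|S| edges. -/
/-!
Union bound: a set `S` of size `s` with more than `3s` induced edges contains `3s` of its at most
`s²` pairs that are all edges, so the probability in question is at most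
`∑_s C(n,s) C(s²,3s) p^{3s}` with `p = C log n / n`. By `C(m,k) ≤ (em/k)^k` the `s`-th term is at
most `(e⁴ n s² p³ / 27)^s ≤ (e⁴ C³ / (27 log n))^s` as soon as `s log² n ≤ n`, so the sum is a
geometric series of ratio `O(1 / log n)`.
-/

open MeasureTheory Filter
open scoped ENNReal

noncomputable def PMF.bernoulliENNReal (p : ℝ≥0∞) (h : p ≤ 1) : PMF Bool :=
  PMF.ofFintype (fun b => cond b p (1 - p)) (by simp [h])

open Finset

theorem measure_pi_bernoulliENNReal_forall_true {ι : Type*} [Fintype ι] [DecidableEq ι]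
    (σ : ι → ℝ≥0∞) (hσ : ∀ i, σ i ≤ 1) (T : Finset ι) :
    Measure.pi (fun i => (PMF.bernoulliENNReal (σ i) (hσ i)).toMeasure)
      {ω : ι → Bool | ∀ i ∈ T, ω i = true} = ∏ i ∈ T, σ i := by
  have hcyl : {ω : ι → Bool | ∀ i ∈ T, ω i = true} =
      Set.univ.pi fun i => if i ∈ T then {true} else Set.univ := by
    ext ω
    simp only [Set.mem_ofPred_eq, Set.mem_pi, Set.mem_univ, true_implies]
    refine forall_congr' fun i => ?_
    split_ifs <;> simp [*]
  have hfactor (i : ι) : (PMF.bernoulliENNReal (σ i) (hσ i)).toMeasure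
      (if i ∈ T then {true} else Set.univ) = if i ∈ T then σ i else 1 := by
    split_ifs
    · rw [PMF.toMeasure_apply_singleton _ _ (measurableSet_singleton _)]
      rfl
    · exact measure_univ
  rw [hcyl, Measure.pi_pi]
  simp only [hfactor]
  rw [prod_ite_mem, univ_inter]

theorem measure_le_card_filter_true_le {ι : Type*} (μ : Measure (ι → Bool)) {q : ℝ≥0∞}
    (hμ : ∀ T : Finset ι, μ {ω | ∀ i ∈ T, ω i = true} ≤ q ^ #T) (E : Finset ι) (m : ℕ) :
    μ {ω | m ≤ #(E.filter fun i => ω i = true)} ≤ (#E).choose m * q ^ m := by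
  classical
  have hsub : {ω : ι → Bool | m ≤ #(E.filter fun i => ω i = true)} ⊆
      ⋃ T ∈ E.powersetCard m, {ω | ∀ i ∈ T, ω i = true} := by
    intro ω hω
    obtain ⟨T, hT, hTm⟩ := exists_subset_card_eq hω
    exact Set.mem_biUnion (mem_powersetCard.2 ⟨hT.trans (filter_subset _ _), hTm⟩)
      fun i hi => (mem_filter.1 (hT hi)).2
  calc μ _ ≤ ∑ T ∈ E.powersetCard m, μ {ω | ∀ i ∈ T, ω i = true} :=
        (measure_mono hsub).trans (measure_biUnion_finset_le _ _)
    _ ≤ ∑ T ∈ E.powersetCard m, q ^ m :=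
        sum_le_sum fun T hT => (hμ T).trans_eq (by rw [(mem_powersetCard.1 hT).2])
    _ = (#E).choose m * q ^ m := by rw [sum_const, card_powersetCard, nsmul_eq_mul]

theorem card_sym2_le_sq {α : Type*} (S : Finset α) : #S.sym2 ≤ #S ^ 2 := by
  rw [card_sym2, Nat.choose_two_right, Nat.add_sub_cancel]
  exact Nat.div_le_of_le_mul (by nlinarith)

theorem measure_exists_small_set_many_edges_le {V : Type*} [Fintype V] [DecidableEq V]
    (μ : Measure (Sym2 V → Bool)) {q : ℝ≥0∞}
    (hμ : ∀ T : Finset (Sym2 V), μ {ω | ∀ e ∈ T, ω e = true} ≤ q ^ #T) (k : ℕ) (x : ℝ) :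
    μ {ω : Sym2 V → Bool | ∃ S : Finset V, (#S : ℝ) ≤ x ∧
        k * #S < {e : Sym2 V | ¬ e.IsDiag ∧ ω e = true ∧ ∀ v ∈ e, v ∈ S}.ncard} ≤
      ∑ s ∈ Icc 1 ⌊x⌋₊, ((Fintype.card V).choose s : ℝ≥0∞) * ((s ^ 2).choose (k * s) : ℕ) *
        q ^ (k * s) := by
  have hsub : {ω : Sym2 V → Bool | ∃ S : Finset V, (#S : ℝ) ≤ x ∧
        k * #S < {e : Sym2 V | ¬ e.IsDiag ∧ ω e = true ∧ ∀ v ∈ e, v ∈ S}.ncard} ⊆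
      ⋃ s ∈ Icc 1 ⌊x⌋₊, ⋃ S ∈ powersetCard s (univ : Finset V),
        {ω | k * s ≤ #(S.sym2.filter fun e => ω e = true)} := by
    rintro ω ⟨S, hSx, hSk⟩
    have hle : {e : Sym2 V | ¬ e.IsDiag ∧ ω e = true ∧ ∀ v ∈ e, v ∈ S}.ncard ≤
        #(S.sym2.filter fun e => ω e = true) := by
      rw [← Set.ncard_coe_finset]
      refine Set.ncard_le_ncard fun e he => ?_
      simp only [coe_filter, mem_sym2_iff, Set.mem_ofPred_eq]
      exact ⟨he.2.2, he.2.1⟩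
    have hS : S.Nonempty := by
      rw [nonempty_iff_ne_empty]
      rintro rfl
      rw [sym2_empty, filter_empty, card_empty] at hle
      rw [card_empty, mul_zero] at hSk
      omega
    simp only [Set.mem_iUnion]
    exact ⟨#S, mem_Icc.2 ⟨hS.card_pos, Nat.le_floor hSx⟩, S, mem_powersetCard_univ.2 rfl,
      hSk.le.trans hle⟩
  refine (measure_mono hsub).trans <| (measure_biUnion_finset_le _ _).trans <|
    sum_le_sum fun s _ => (measure_biUnion_finset_le _ _).trans ?_
  calc ∑ S ∈ powersetCard s (univ : Finset V), μ {ω | k * s ≤ #(S.sym2.filter fun e => ω e = true)}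
      ≤ ∑ S ∈ powersetCard s (univ : Finset V), ((s ^ 2).choose (k * s) : ℕ) * q ^ (k * s) := by
        refine sum_le_sum fun S hS => (measure_le_card_filter_true_le μ hμ _ _).trans ?_
        gcongr
        exact (mem_powersetCard.1 hS).2 ▸ card_sym2_le_sq S
    _ = ((Fintype.card V).choose s : ℝ≥0∞) * ((s ^ 2).choose (k * s) : ℕ) * q ^ (k * s) := by
        rw [sum_const, card_powersetCard, card_univ, nsmul_eq_mul, mul_assoc]

theorem Nat.choose_le_exp_one_mul_div_pow (m k : ℕ) :
    (m.choose k : ℝ) ≤ (Real.exp 1 * m / k) ^ k := by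
  rcases k.eq_zero_or_pos with rfl | hk
  · simp
  have hkk : (0 : ℝ) < (k : ℝ) ^ k := by positivity
  have hfac : (0 : ℝ) < k.factorial := by exact_mod_cast k.factorial_pos
  have hexp : (k : ℝ) ^ k / k.factorial ≤ Real.exp 1 ^ k := by
    rw [Real.exp_one_pow]; exact Real.pow_div_factorial_le_exp _ k.cast_nonneg k
  calc (m.choose k : ℝ) ≤ (m : ℝ) ^ k / k.factorial := Nat.choose_le_pow_div k m
    _ = (m : ℝ) ^ k / (k : ℝ) ^ k * ((k : ℝ) ^ k / k.factorial) := by field_simp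
    _ ≤ (m : ℝ) ^ k / (k : ℝ) ^ k * Real.exp 1 ^ k := by gcongr
    _ = (Real.exp 1 * m / k) ^ k := by rw [div_pow, mul_pow]; ring

theorem choose_mul_choose_sq_mul_pow_le (n s : ℕ) {q : ℝ} (hq : 0 ≤ q) :
    (n.choose s : ℝ) * ((s ^ 2).choose (3 * s) : ℝ) * q ^ (3 * s) ≤
      (Real.exp 4 / 27 * (n * s ^ 2 * q ^ 3)) ^ s := by
  rcases s.eq_zero_or_pos with rfl | hs
  · simp
  have hs' : (s : ℝ) ≠ 0 := by positivity
  calc (n.choose s : ℝ) * ((s ^ 2).choose (3 * s) : ℝ) * q ^ (3 * s)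
      ≤ (Real.exp 1 * n / s) ^ s * (Real.exp 1 * ((s ^ 2 : ℕ) : ℝ) / (3 * s : ℕ)) ^ (3 * s) *
          q ^ (3 * s) := by
        gcongr
        · exact Nat.choose_le_exp_one_mul_div_pow n s
        · exact Nat.choose_le_exp_one_mul_div_pow _ _
    _ = (Real.exp 4 / 27 * (n * s ^ 2 * q ^ 3)) ^ s := by
        rw [mul_assoc, ← mul_pow, pow_mul, ← mul_pow, show Real.exp 4 = Real.exp 1 ^ 4 by
          rw [Real.exp_one_pow]; norm_num]
        congr 1
        push_cast
        field_simp
        ring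

theorem mul_sq_mul_div_pow_three_le {n s C l : ℝ} (hC : 0 ≤ C) (hl : 0 < l) (hs : 0 ≤ s)
    (hsn : s * l ^ 2 ≤ n) : n * s ^ 2 * (C * l / n) ^ 3 ≤ C ^ 3 / l := by
  have h0 : 0 ≤ s * l ^ 2 := by positivity
  rcases (h0.trans hsn).eq_or_lt with hn | hn
  · rw [← hn, zero_mul, zero_mul]; positivity
  calc n * s ^ 2 * (C * l / n) ^ 3 = C ^ 3 / l * ((s * l ^ 2) ^ 2 / n ^ 2) := by
        field_simp
    _ ≤ C ^ 3 / l * 1 := by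
        gcongr
        exact div_le_one_of_le₀ (pow_le_pow_left₀ (by positivity) hsn 2) (by positivity)
    _ = C ^ 3 / l := mul_one _

theorem mul_log_natCast_div_nonneg {C : ℝ} (hC : 0 ≤ C) (n : ℕ) : 0 ≤ C * Real.log n / n := by
  have := Real.log_natCast_nonneg n
  positivity

theorem sum_Icc_one_pow_le_two_mul {r : ℝ} (hr : 0 ≤ r) (hr' : r ≤ 1 / 2) (L : ℕ) :
    ∑ s ∈ Icc 1 L, r ^ s ≤ 2 * r := by
  rw [← Ico_add_one_right_eq_Icc]
  calc ∑ s ∈ Ico 1 (L + 1), r ^ s ≤ r ^ 1 / (1 - r) := geom_sum_Ico_le_of_lt_one hr (by linarith)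
    _ ≤ 2 * r := by
        rw [pow_one, div_le_iff₀ (by linarith)]
        nlinarith

theorem tendsto_sum_choose_mul_choose_mul_pow {C : ℝ} (hC : 0 ≤ C) :
    Tendsto (fun n : ℕ => ∑ s ∈ Icc 1 ⌊(n : ℝ) / (Real.log n) ^ 2⌋₊,
        (n.choose s : ℝ) * ((s ^ 2).choose (3 * s) : ℝ) * (C * Real.log n / n) ^ (3 * s))
      atTop (nhds 0) := by
  set K := Real.exp 4 / 27 * C ^ 3
  have hlog : Tendsto (fun n : ℕ => Real.log n) atTop atTop :=
    Real.tendsto_log_atTop.comp tendsto_natCast_atTop_atTop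
  have hp := mul_log_natCast_div_nonneg hC
  have hbound : ∀ᶠ n : ℕ in atTop, ∑ s ∈ Icc 1 ⌊(n : ℝ) / (Real.log n) ^ 2⌋₊,
      (n.choose s : ℝ) * ((s ^ 2).choose (3 * s) : ℝ) * (C * Real.log n / n) ^ (3 * s) ≤
        2 * (K / Real.log n) := by
    filter_upwards [hlog.eventually_gt_atTop 0, hlog.eventually_ge_atTop (2 * K)] with n hl hK
    have hr : K / Real.log n ≤ 1 / 2 := by rw [div_le_iff₀ hl]; linarith
    refine (sum_le_sum fun s hs => ?_).trans
      (sum_Icc_one_pow_le_two_mul (by positivity) hr _)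
    have hsn : (s : ℝ) * Real.log n ^ 2 ≤ n := by
      rw [← le_div_iff₀ (by positivity)]
      exact (Nat.le_floor_iff (by positivity)).1 (mem_Icc.1 hs).2
    refine (choose_mul_choose_sq_mul_pow_le n s (hp n)).trans (pow_le_pow_left₀ ?_ ?_ s)
    · have := hp n; positivity
    · refine (mul_le_mul_of_nonneg_left ?_ (by positivity)).trans_eq (mul_div_assoc _ _ _).symm
      exact mul_sq_mul_div_pow_three_le hC hl s.cast_nonneg hsn
  have hlim : Tendsto (fun n : ℕ => 2 * (K / Real.log n)) atTop (nhds 0) := by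
    simpa using (hlog.const_div_atTop K).const_mul 2
  refine squeeze_zero' (Eventually.of_forall fun n => sum_nonneg fun s _ => ?_) hbound hlim
  have := hp n; positivity

/-- In a random graph on `n` vertices in which every pair is an edge independently with
probability at most `C log n / n`, the expected number of vertex sets `S` of size
`s ≤ n/log² n` inducing more than `3s` edges, summed over all such `s`, is bounded by
`∑_s C(n,s) C(s²,3s) (C log n / n)^{3s} = o(1)`; hence a.a.s. every set `S` with
`|S| ≤ n/log² n` induces at most `3|S|` edges. -/
theorem stmt_18 (C : ℝ) (hC : 0 < C)
    (σ : ∀ n : ℕ, Sym2 (Fin n) → ℝ≥0∞) (hσ1 : ∀ n e, σ n e ≤ 1)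
    (hσ : ∀ n e, σ n e ≤ ENNReal.ofReal (C * Real.log n / n)) :
    Tendsto (fun n : ℕ => ∑ s ∈ Finset.Icc 1 ⌊(n : ℝ) / (Real.log n) ^ 2⌋₊,
        (n.choose s : ℝ) * ((s ^ 2).choose (3 * s) : ℝ) * (C * Real.log n / n) ^ (3 * s))
      atTop (nhds 0) ∧
    Tendsto (fun n : ℕ =>
        (Measure.pi fun e : Sym2 (Fin n) => (PMF.bernoulliENNReal (σ n e) (hσ1 n e)).toMeasure)
          {ω : Sym2 (Fin n) → Bool | ∃ S : Finset (Fin n),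
            (S.card : ℝ) ≤ (n : ℝ) / (Real.log n) ^ 2 ∧
            3 * S.card <
              {e : Sym2 (Fin n) | ¬ e.IsDiag ∧ ω e = true ∧ ∀ v ∈ e, v ∈ S}.ncard})
      atTop (nhds 0) := by
  have hsum := tendsto_sum_choose_mul_choose_mul_pow hC.le
  refine ⟨hsum, ?_⟩
  have hlim := ENNReal.tendsto_ofReal hsum
  rw [ENNReal.ofReal_zero] at hlim
  refine tendsto_of_tendsto_of_tendsto_of_le_of_le tendsto_const_nhds hlim (fun _ => zero_le)
    fun n => ?_
  have hp := mul_log_natCast_div_nonneg hC.le n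
  refine (measure_exists_small_set_many_edges_le _ (q := ENNReal.ofReal (C * Real.log n / n))
    (fun T => ?_) 3 _).trans_eq ?_
  · rw [measure_pi_bernoulliENNReal_forall_true]
    exact prod_le_pow_card _ _ _ fun e _ => hσ n e
  · rw [ENNReal.ofReal_sum_of_nonneg fun s _ => by positivity, Fintype.card_fin]
    refine sum_congr rfl fun s _ => ?_
    rw [ENNReal.ofReal_mul (by positivity), ENNReal.ofReal_mul (by positivity),
      ENNReal.ofReal_natCast, ENNReal.ofReal_natCast, ENNReal.ofReal_pow hp]
end
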